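/- arXiv:1804.07996 — 10 statements merged into one kernel-verified Lean document; each statement's English description precedes it below -/
import Mathlib

section
/- Every natural number except 1, 3, 5, and 7 is the sum of at most three natural numbers whose binary representation contains at least as many 0's as 1's. -/
/-!
Doubling appends a 0 to the binary representation, so every even number `2m` is a sum of two
elements of `S_≥` as soon as `m = u + v` with `2u, v ∈ S_≥`. Such a splitting exists for every `m`,
by induction on the binary digits: from `m = u + v` we get `2m = 2u + 2v` and
`2m + 1 = (2v + 1) + 2u`, where `2(2v + 1) ∈ S_≥` because it appends the digits `1, 0` to `v`.
An odd `n ≥ 9` is `9 + (n - 9)` with `9 = 1001₂ ∈ S_≥` and `n - 9` even.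
-/

/-- `n` has at least as many 0's as 1's in its binary representation (0 included). -/
def Sge (n : ℕ) : Prop := (Nat.digits 2 n).count 1 ≤ (Nat.digits 2 n).count 0

lemma sge_two_mul {n : ℕ} (h : Sge n) : Sge (2 * n) := by
  rcases n.eq_zero_or_pos with rfl | hn
  · exact h
  · unfold Sge at h ⊢
    rw [Nat.digits_base_mul one_lt_two hn]
    simp only [List.count_cons_self, List.count_cons_of_ne zero_ne_one]
    omega

lemma sge_two_mul_two_mul_add_one {n : ℕ} (h : Sge n) : Sge (2 * (2 * n + 1)) := by
  unfold Sge at h ⊢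
  rw [Nat.digits_base_mul one_lt_two (by omega), add_comm,
    Nat.digits_add 2 one_lt_two 1 n one_lt_two (Or.inl one_ne_zero)]
  simp only [List.count_cons_self, List.count_cons_of_ne zero_ne_one,
    List.count_cons_of_ne one_ne_zero]
  omega

theorem exists_sge_two_mul_add_sge (m : ℕ) : ∃ u v, Sge (2 * u) ∧ Sge v ∧ u + v = m := by
  induction m using Nat.evenOddRec with
  | h0 => exact ⟨0, 0, by simp [Sge], by simp [Sge], rfl⟩
  | h_even m ih =>
    obtain ⟨u, v, hu, hv, rfl⟩ := ih
    exact ⟨2 * u, 2 * v, sge_two_mul hu, sge_two_mul hv, by ring⟩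
  | h_odd m ih =>
    obtain ⟨u, v, hu, hv, rfl⟩ := ih
    exact ⟨2 * v + 1, 2 * u, sge_two_mul_two_mul_add_one hv, hu, by ring⟩

theorem exists_sge_add_sge_of_even {n : ℕ} (hn : Even n) : ∃ x y, Sge x ∧ Sge y ∧ n = x + y := by
  obtain ⟨m, rfl⟩ := hn
  obtain ⟨u, v, hu, hv, rfl⟩ := exists_sge_two_mul_add_sge m
  exact ⟨2 * u, 2 * v, hu, sge_two_mul hv, by ring⟩

theorem sum_three_Sge (n : ℕ) (h : n ∉ ({1, 3, 5, 7} : Set ℕ)) :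
    ∃ x y z : ℕ, Sge x ∧ Sge y ∧ Sge z ∧ n = x + y + z := by
  simp only [Set.mem_insert_iff, Set.mem_singleton_iff, not_or] at h
  rcases n.even_or_odd with hn | hn
  · obtain ⟨x, y, hx, hy, rfl⟩ := exists_sge_add_sge_of_even hn
    exact ⟨x, y, 0, hx, hy, by simp [Sge], rfl⟩
  · have h9 : 9 ≤ n := by obtain ⟨k, rfl⟩ := hn; omega
    obtain ⟨x, y, hx, hy, hxy⟩ :=
      exists_sge_add_sge_of_even (Nat.Odd.sub_odd hn (by decide : Odd 9))
    exact ⟨9, x, y, by simp [Sge], hx, hy, by omega⟩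
end

section
/- For every n ≥ 1, the number 2^n − 1 cannot be written as a sum of two natural numbers each of whose binary representation has at least as many 0's as 1's. -/
namespace Nat

theorem digits_sum_eq_mod_add_digits_sum_div {b : ℕ} (hb : 1 < b) (x : ℕ) :
    (b.digits x).sum = x % b + (b.digits (x / b)).sum := by
  rcases x.eq_zero_or_pos with rfl | hx
  · simp
  · rw [digits_def' hb hx, List.sum_cons]

-- Every digit of `b ^ n - 1` is `b - 1`, so adding `x` and `y` produces no carries.
theorem digits_sum_add_digits_sum_of_add_add_one_eq_pow {b : ℕ} (hb : 1 < b) :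
    ∀ {n x y : ℕ}, x + y + 1 = b ^ n → (b.digits x).sum + (b.digits y).sum = n * (b - 1)
  | 0, x, y, h => by
    obtain ⟨rfl, rfl⟩ : x = 0 ∧ y = 0 := by simp at h; omega
    simp
  | n + 1, x, y, h => by
    have hsplit : x + y + 1 = (x % b + y % b + 1) + b * (x / b + y / b) := by
      have := div_add_mod x b; have := div_add_mod y b; linarith
    have hlow : x % b + y % b + 1 = b := by
      refine eq_of_dvd_of_lt_two_mul (by omega) ?_ ?_
      · rw [← Nat.dvd_add_left (dvd_mul_right b _), ← hsplit, h, pow_succ']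
        exact dvd_mul_right b _
      · have := mod_lt x (by omega : 0 < b); have := mod_lt y (by omega : 0 < b); omega
    have hhigh : x / b + y / b + 1 = b ^ n := by
      refine Nat.eq_of_mul_eq_mul_left (by omega : 0 < b) ?_
      rw [← pow_succ', ← h, hsplit, hlow]; ring
    rw [digits_sum_eq_mod_add_digits_sum_div hb x, digits_sum_eq_mod_add_digits_sum_div hb y,
      add_mul, one_mul, ← digits_sum_add_digits_sum_of_add_add_one_eq_pow hb hhigh]
    omega

end Nat

namespace List

theorem sum_eq_count_one_of_forall_lt_two {l : List ℕ} (h : ∀ d ∈ l, d < 2) :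
    l.sum = l.count 1 := by
  induction l with
  | nil => rfl
  | cons a l ih =>
    have ha : a < 2 := h a mem_cons_self
    rw [sum_cons, count_cons, ih fun d hd => h d (mem_cons_of_mem a hd)]
    interval_cases a <;> simp [add_comm]

theorem count_add_count_le_length {α : Type*} [BEq α] [LawfulBEq α] {a b : α} (hab : a ≠ b)
    (l : List α) : l.count a + l.count b ≤ l.length := by
  induction l with
  | nil => simp
  | cons c l ih =>
    simp only [count_cons, length_cons, beq_iff_eq]
    by_cases hca : c = a <;> by_cases hcb : c = b <;> simp_all <;> omega

end List

theorem sge_zero : Sge 0 := by simp [Sge]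

theorem Sge.two_mul_digits_sum_le {m k : ℕ} (h : Sge m) (hk : m < 2 ^ k) :
    2 * (Nat.digits 2 m).sum ≤ k := by
  have hsum := List.sum_eq_count_one_of_forall_lt_two fun _ hd =>
    Nat.digits_lt_base (m := m) one_lt_two hd
  have hcount := List.count_add_count_le_length zero_ne_one (Nat.digits 2 m)
  have hlen := (Nat.digits_length_le_iff one_lt_two m).2 hk
  unfold Sge at h
  omega

theorem add_add_one_ne_two_pow_of_sge {n x y : ℕ} (hn : 1 ≤ n) (hx : Sge x) (hy : Sge y) :
    x + y + 1 ≠ 2 ^ n := by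
  intro h
  wlog hxy : x ≤ y generalizing x y
  · exact this hy hx (by omega) (by omega)
  have hpow : 2 ^ n = 2 * 2 ^ (n - 1) := by rw [← pow_succ']; congr 1; omega
  have hdigits := Nat.digits_sum_add_digits_sum_of_add_add_one_eq_pow one_lt_two h
  have hx' := hx.two_mul_digits_sum_le (k := n - 1) (by omega)
  have hy' := hy.two_mul_digits_sum_le (k := n) (by omega)
  omega

theorem pow_sub_one_not_sum_two_Sge (n : ℕ) (hn : 1 ≤ n) :
    ¬ Sge (2 ^ n - 1) ∧ ¬ ∃ x y : ℕ, Sge x ∧ Sge y ∧ 2 ^ n - 1 = x + y := by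
  have hpos : 1 ≤ 2 ^ n := Nat.one_le_two_pow
  refine ⟨fun h => add_add_one_ne_two_pow_of_sge hn h sge_zero (by omega), ?_⟩
  rintro ⟨x, y, hx, hy, hxy⟩
  exact add_add_one_ne_two_pow_of_sge hn hx hy (by omega)
end

section
/- There are infinitely many natural numbers that are not the sum of one or two digitally balanced binary numbers; in particular, every number whose binary representation is of the form 1^(2k+3) (an odd number ≥ 3 of 1's) has no such representation. -/
/-!
A balanced number has an even number of binary digits. If `2 ^ (2k+3) - 1 = x + y`, the larger
summand lies in `[2 ^ (2k+2), 2 ^ (2k+3))`, so it has `2k+3` binary digits and cannot be balanced;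
the same applies to `2 ^ (2k+3) - 1` itself.
-/

def Sbal (n : ℕ) : Prop := (Nat.digits 2 n).count 1 = (Nat.digits 2 n).count 0

theorem count_zero_add_count_one_eq_length {l : List ℕ} (h : ∀ d ∈ l, d < 2) :
    l.count 0 + l.count 1 = l.length := by
  induction l with
  | nil => rfl
  | cons a t ih =>
    have ht := ih fun d hd => h d (List.mem_cons_of_mem a hd)
    have ha := h a List.mem_cons_self
    interval_cases a <;> simp <;> omega

theorem Sbal.even_length_digits {n : ℕ} (h : Sbal n) : Even (Nat.digits 2 n).length := by
  have hsum := count_zero_add_count_one_eq_length fun d hd =>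
    Nat.digits_lt_base (m := n) one_lt_two hd
  exact ⟨(Nat.digits 2 n).count 1, by rw [Sbal] at h; omega⟩

theorem Nat.length_digits_of_pow_le_of_lt_pow {b m n : ℕ} (hb : 1 < b) (h₁ : b ^ m ≤ n)
    (h₂ : n < b ^ (m + 1)) : (b.digits n).length = m + 1 := by
  have hn : n ≠ 0 := ((Nat.pow_pos (by omega : 0 < b)).trans_le h₁).ne'
  rw [Nat.length_digits b n hb hn, Nat.log_eq_of_pow_le_of_lt_pow h₁ h₂]

theorem not_sbal_of_pow_le_of_lt_pow {m n : ℕ} (hm : Even m) (h₁ : 2 ^ m ≤ n)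
    (h₂ : n < 2 ^ (m + 1)) : ¬ Sbal n := fun h => by
  have := h.even_length_digits
  rw [Nat.length_digits_of_pow_le_of_lt_pow one_lt_two h₁ h₂, Nat.even_add_one] at this
  exact this hm

theorem not_sbal_and_not_sum_two_sbal {m : ℕ} (hm : Even m) :
    ¬ Sbal (2 ^ (m + 1) - 1) ∧ ¬ ∃ x y : ℕ, Sbal x ∧ Sbal y ∧ 2 ^ (m + 1) - 1 = x + y := by
  have hpow : 2 ^ (m + 1) = 2 * 2 ^ m := pow_succ' 2 m
  have hpos : 0 < 2 ^ m := Nat.two_pow_pos m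
  refine ⟨not_sbal_of_pow_le_of_lt_pow hm (by omega) (by omega), ?_⟩
  rintro ⟨x, y, hx, hy, hsum⟩
  rcases le_total x y with hle | hle
  · exact not_sbal_of_pow_le_of_lt_pow hm (by omega) (by omega) hy
  · exact not_sbal_of_pow_le_of_lt_pow hm (by omega) (by omega) hx

theorem infinitely_many_not_sum_two_Sbal :
    {n : ℕ | ¬ Sbal n ∧ ¬ ∃ x y : ℕ, Sbal x ∧ Sbal y ∧ n = x + y}.Infinite ∧
    ∀ k : ℕ, 2 ^ (2 * k + 3) - 1 ∈
      {n : ℕ | ¬ Sbal n ∧ ¬ ∃ x y : ℕ, Sbal x ∧ Sbal y ∧ n = x + y} := by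
  have hmem : ∀ k : ℕ, 2 ^ (2 * k + 3) - 1 ∈
      {n : ℕ | ¬ Sbal n ∧ ¬ ∃ x y : ℕ, Sbal x ∧ Sbal y ∧ n = x + y} := fun k =>
    not_sbal_and_not_sum_two_sbal (m := 2 * k + 2) ⟨k + 1, by ring⟩
  refine ⟨Set.infinite_of_injective_forall_mem (fun a b hab => ?_) hmem, hmem⟩
  have := Nat.pow_right_injective le_rfl <|
    Nat.sub_one_cancel (Nat.two_pow_pos _) (Nat.two_pow_pos _) hab
  omega
end

section
/- Every natural number is the sum of at most two natural numbers whose binary representation has at most as many 0's as 1's. -/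
/-!
Let `e n` be the number of 1's minus the number of 0's among the binary digits of `n`.
Induction on `n` proves the stronger claim that every `n > 0` splits as `a + b` with
`e a ≥ 0` and `e b ≥ 1`: from such a splitting `m = a + (c + 1)` one gets
`2 m = (2 c + 1) + (2 a + 1)` and `2 m + 1 = 2 (c + 1) + (2 a + 1)`, and the first summands
stay admissible because `e (c + 1) ≤ e c + 2`.
-/

/-- `n` has at most as many 0's as 1's in its binary representation. -/
def Sle (n : ℕ) : Prop := (Nat.digits 2 n).count 0 ≤ (Nat.digits 2 n).count 1

namespace Nat

def bitExcess (n : ℕ) : ℤ := (digits 2 n).count 1 - (digits 2 n).count 0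

@[simp]
lemma bitExcess_zero : bitExcess 0 = 0 := by
  simp [bitExcess]

lemma bitExcess_two_mul {n : ℕ} (hn : n ≠ 0) : bitExcess (2 * n) = bitExcess n - 1 := by
  rw [bitExcess, bitExcess, digits_base_mul one_lt_two (pos_of_ne_zero hn),
    List.count_cons_self, List.count_cons_of_ne zero_ne_one]
  push_cast
  ring

lemma bitExcess_two_mul_add_one (n : ℕ) : bitExcess (2 * n + 1) = bitExcess n + 1 := by
  rw [bitExcess, bitExcess, add_comm, digits_add 2 one_lt_two 1 n one_lt_two (Or.inl one_ne_zero),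
    List.count_cons_self, List.count_cons_of_ne one_ne_zero]
  push_cast
  ring

lemma bitExcess_succ_le (n : ℕ) : bitExcess (n + 1) ≤ bitExcess n + 2 := by
  induction n using Nat.strong_induction_on with
  | _ n ih =>
    obtain ⟨m, rfl | rfl⟩ := even_or_odd' n
    · rw [bitExcess_two_mul_add_one]
      rcases eq_or_ne m 0 with rfl | hm
      · simp
      · rw [bitExcess_two_mul hm]
        omega
    · have hm := ih m (by omega)
      rw [show 2 * m + 1 + 1 = 2 * (m + 1) by ring, bitExcess_two_mul m.add_one_ne_zero,
        bitExcess_two_mul_add_one]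
      omega

lemma sle_iff_bitExcess_nonneg (n : ℕ) : Sle n ↔ 0 ≤ bitExcess n := by
  simp only [Sle, bitExcess, sub_nonneg, Nat.cast_le]

lemma exists_add_bitExcess_nonneg_pos {n : ℕ} (hn : n ≠ 0) :
    ∃ a b, n = a + b ∧ 0 ≤ bitExcess a ∧ 0 < bitExcess b := by
  induction n using Nat.strong_induction_on with
  | _ n ih =>
    obtain ⟨m, rfl | rfl⟩ := even_or_odd' n
    · obtain ⟨a, b, rfl, ha, hb⟩ := ih m (by omega) (by omega)
      obtain ⟨c, rfl⟩ : ∃ c, b = c + 1 :=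
        exists_eq_succ_of_ne_zero (by rintro rfl; simp at hb)
      refine ⟨2 * c + 1, 2 * a + 1, by ring, ?_, ?_⟩
      · have := bitExcess_succ_le c
        rw [bitExcess_two_mul_add_one]
        omega
      · rw [bitExcess_two_mul_add_one]
        omega
    · rcases eq_or_ne m 0 with rfl | hm
      · exact ⟨0, 1, rfl, by simp, by simp [bitExcess]⟩
      obtain ⟨a, b, rfl, ha, hb⟩ := ih m (by omega) hm
      have hb0 : b ≠ 0 := by rintro rfl; simp at hb
      refine ⟨2 * b, 2 * a + 1, by ring, ?_, ?_⟩
      · rw [bitExcess_two_mul hb0]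
        omega
      · rw [bitExcess_two_mul_add_one]
        omega

end Nat

theorem sum_two_Sle (n : ℕ) : ∃ x y : ℕ, Sle x ∧ Sle y ∧ n = x + y := by
  simp only [Nat.sle_iff_bitExcess_nonneg]
  rcases eq_or_ne n 0 with rfl | hn
  · exact ⟨0, 0, by simp, by simp, rfl⟩
  · obtain ⟨a, b, rfl, ha, hb⟩ := Nat.exists_add_bitExcess_nonneg_pos hn
    exact ⟨a, b, ha, hb.le, rfl⟩
end

section
/- Every natural number is the sum of at most two natural numbers whose binary representation has an unequal number of 0's and 1's. -/
/-!
If `n = 2m` is balanced, dropping its final binary digit `0` leaves `m` with one more `1` than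
`0`, so `n = m + m`. If `n = 2m + 1` is balanced, turning its final `1` into a `0` gives `2m` with
two more `0`s than `1`s, so `n = 2m + 1`, and `1` is unbalanced.
-/

/-- `n` has an unequal number of 0's and 1's in its binary representation. -/
def Sne (n : ℕ) : Prop := (Nat.digits 2 n).count 0 ≠ (Nat.digits 2 n).count 1

lemma Nat.digits_two_two_mul {m : ℕ} (hm : m ≠ 0) : Nat.digits 2 (2 * m) = 0 :: Nat.digits 2 m := by
  simpa using Nat.digits_add 2 one_lt_two 0 m two_pos (Or.inr hm)

lemma Nat.digits_two_two_mul_add_one (m : ℕ) :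
    Nat.digits 2 (2 * m + 1) = 1 :: Nat.digits 2 m := by
  simpa [add_comm] using Nat.digits_add 2 one_lt_two 1 m one_lt_two (Or.inl one_ne_zero)

lemma sne_one : Sne 1 := by
  simp [Sne]

lemma sne_of_not_sne_two_mul {m : ℕ} (hm : m ≠ 0) (h : ¬Sne (2 * m)) : Sne m := by
  unfold Sne at *
  simp only [Nat.digits_two_two_mul hm, List.count_cons_self, List.count_cons_of_ne zero_ne_one,
    not_not] at h
  omega

lemma sne_two_mul_of_not_sne_two_mul_add_one {m : ℕ} (hm : m ≠ 0) (h : ¬Sne (2 * m + 1)) :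
    Sne (2 * m) := by
  unfold Sne at *
  simp only [Nat.digits_two_two_mul hm, Nat.digits_two_two_mul_add_one, List.count_cons_self,
    List.count_cons_of_ne zero_ne_one, List.count_cons_of_ne one_ne_zero, not_not] at h ⊢
  omega

theorem sum_two_Sne (n : ℕ) :
    ∃ x y : ℕ, (x = 0 ∨ Sne x) ∧ (y = 0 ∨ Sne y) ∧ n = x + y := by
  by_cases hn : Sne n
  · exact ⟨n, 0, Or.inr hn, Or.inl rfl, rfl⟩
  obtain ⟨m, rfl | rfl⟩ := n.even_or_odd'
  · rcases eq_or_ne m 0 with rfl | hm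
    · exact ⟨0, 0, Or.inl rfl, Or.inl rfl, rfl⟩
    have hsne := sne_of_not_sne_two_mul hm hn
    exact ⟨m, m, Or.inr hsne, Or.inr hsne, two_mul m⟩
  · rcases eq_or_ne m 0 with rfl | hm
    · exact absurd sne_one hn
    exact ⟨2 * m, 1, Or.inr (sne_two_mul_of_not_sne_two_mul_add_one hm hn), Or.inr sne_one, rfl⟩
end

section
/- There are infinitely many even natural numbers that are not the sum of at most two totally balanced numbers. -/
/-!
A totally balanced word over `{0, 1}` has even length, so a totally balanced number that is at
least `2 ^ (2k)` (at least `2k + 1` binary digits) is at least `2 ^ (2k + 1)`. Hence if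
`2 ^ (2k + 1) = x + y` with `y ≤ x` and `x` totally balanced, then `x = 2 ^ (2k + 1)` and `y = 0`;
but `2 ^ (2k + 1)` is written `10…0` with `2k + 1` zeros, so it is not totally balanced for
`k ≥ 1`.
-/

def binRep (n : ℕ) : List ℕ := (Nat.digits 2 n).reverse

def TotBalWord (w : List ℕ) : Prop :=
  w.count 1 = w.count 0 ∧ ∀ p : List ℕ, p <+: w → p.count 0 ≤ p.count 1

def STB (n : ℕ) : Prop := TotBalWord (binRep n)

lemma List.length_eq_count_zero_add_count_one {w : List ℕ} (hw : ∀ a ∈ w, a < 2) :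
    w.length = w.count 0 + w.count 1 := by
  induction w with
  | nil => rfl
  | cons a w ih =>
    have ha : a < 2 := hw a List.mem_cons_self
    have := ih fun b hb => hw b (List.mem_cons_of_mem a hb)
    interval_cases a <;> simp [this] <;> omega

lemma TotBalWord.even_length {w : List ℕ} (hw : TotBalWord w) (hbin : ∀ a ∈ w, a < 2) :
    Even w.length := by
  rw [List.length_eq_count_zero_add_count_one hbin, hw.1]
  exact ⟨_, rfl⟩

lemma STB.even_length_digits {x : ℕ} (hx : STB x) : Even (Nat.digits 2 x).length := by
  simpa [binRep] using
    hx.even_length fun a ha => Nat.digits_lt_base one_lt_two (List.mem_reverse.mp ha)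

lemma not_STB_two_pow {k : ℕ} (hk : k ≠ 1) : ¬ STB (2 ^ k) := by
  intro h
  have hdigits : Nat.digits 2 (2 ^ k) = List.replicate k 0 ++ [1] := by
    simpa using Nat.digits_base_pow_mul (k := k) one_lt_two one_pos
  have hcount := h.1
  rw [binRep, hdigits] at hcount
  simp [List.count_replicate] at hcount
  omega

lemma STB.two_pow_succ_le {x k : ℕ} (hx : STB x) (h : 2 ^ (2 * k) ≤ x) :
    2 ^ (2 * k + 1) ≤ x := by
  rw [← Nat.lt_digits_length_iff one_lt_two] at h ⊢
  obtain ⟨r, hr⟩ := hx.even_length_digits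
  omega

lemma two_pow_ne_add_of_STB {k x y : ℕ} (hk : k ≠ 0) (hx : STB x) (hyx : y ≤ x) :
    2 ^ (2 * k + 1) ≠ x + y := by
  intro hsum
  have hxn : 2 ^ (2 * k + 1) ≤ x := hx.two_pow_succ_le (by rw [pow_succ] at hsum; omega)
  have hx_eq : x = 2 ^ (2 * k + 1) := by omega
  exact not_STB_two_pow (by omega) (hx_eq ▸ hx)

theorem infinitely_many_even_not_sum_two_STB :
    {n : ℕ | Even n ∧ ¬ STB n ∧ ¬ ∃ x y : ℕ, STB x ∧ STB y ∧ n = x + y}.Infinite := by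
  have hinj : Function.Injective fun k : ℕ => 2 ^ (2 * (k + 1) + 1) :=
    (Nat.pow_right_injective le_rfl).comp fun a b h => by omega
  refine Set.infinite_of_injective_forall_mem hinj fun k =>
    ⟨(Nat.even_pow' (by omega)).mpr even_two, not_STB_two_pow (by omega), ?_⟩
  rintro ⟨x, y, hx, hy, hsum⟩
  rcases le_total y x with hyx | hxy
  · exact two_pow_ne_add_of_STB k.succ_ne_zero hx hyx hsum
  · exact two_pow_ne_add_of_STB k.succ_ne_zero hy hxy (hsum.trans (add_comm x y))
end

section
/- For k ≥ 2, the greatest common divisor of the set of base-k digitally balanced numbers is (k−1)/2 if k is odd, and k−1 if k is even. -/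
/-!
Since `k ≡ 1 [MOD k - 1]`, a number is congruent to its digit sum modulo `k - 1`, and a
balanced number with `c` copies of each digit has digit sum `c * T`, where
`T = 0 + 1 + ⋯ + (k - 1)`. Hence `gcd (k - 1) T` divides every balanced number, and this gcd
is `(k - 1) / 2` for odd `k` and `k - 1` for even `k`. Conversely, two balanced numbers that
differ only by swapping a lowest digit pair `0 1` differ by `k - 1`, and the balanced number
with digits `0, 1, …, k - 1` is congruent to `T` modulo `k - 1`; so every common divisor
divides both `k - 1` and `T`.
-/

/-- `n` is base-`k` digitally balanced: every digit `0, …, k-1` occurs the same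
number of times in its canonical base-`k` representation. -/
def DigBal (k n : ℕ) : Prop :=
  ∀ i j : ℕ, i < k → j < k → (Nat.digits k n).count i = (Nat.digits k n).count j

open Finset

theorem Nat.modEq_digits_sum_sub_one {k : ℕ} (hk : 1 ≤ k) (n : ℕ) :
    n ≡ (Nat.digits k n).sum [MOD k - 1] := by
  conv_lhs => rw [← Nat.ofDigits_digits k n]
  rw [← Nat.ofDigits_one]
  exact Nat.ofDigits_modEq' _ _ _ (Nat.modEq_sub hk) _

theorem List.sum_eq_sum_range_count_mul {k : ℕ} {L : List ℕ} (hL : ∀ x ∈ L, x < k) :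
    L.sum = ∑ i ∈ Finset.range k, L.count i * i :=
  Finset.sum_list_count_of_subset L _ fun x hx => by simpa using hL x (List.mem_toFinset.1 hx)

theorem Nat.gcd_sub_one_sum_range (k : ℕ) :
    Nat.gcd (k - 1) (∑ i ∈ range k, i) = if Odd k then (k - 1) / 2 else k - 1 := by
  have hsum := sum_range_id_mul_two k
  rcases Nat.even_or_odd' k with ⟨m, rfl | rfl⟩
  · have hT : ∑ i ∈ range (2 * m), i = m * (2 * m - 1) := by
      rw [Nat.mul_assoc, Nat.mul_comm] at hsum
      omega
    simp [hT]
  · have hT : ∑ i ∈ range (2 * m + 1), i = (2 * m + 1) * m := by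
      simp only [Nat.add_sub_cancel] at hsum
      linarith
    have h2 : Nat.gcd 2 (2 * m + 1) = 1 := by simp
    simp [hT, Nat.gcd_mul_right, h2]

namespace DigBal

variable {k n : ℕ}

theorem digits_sum_eq (hk : 1 < k) (hb : DigBal k n) :
    (Nat.digits k n).sum = (Nat.digits k n).count 0 * ∑ i ∈ range k, i := by
  rw [List.sum_eq_sum_range_count_mul fun x hx => Nat.digits_lt_base hk hx, mul_sum]
  exact sum_congr rfl fun i hi => by rw [hb i 0 (mem_range.1 hi) (by omega)]

theorem dvd_iff {e : ℕ} (hk : 1 < k) (hb : DigBal k n) (he : e ∣ k - 1) :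
    e ∣ n ↔ e ∣ (Nat.digits k n).count 0 * ∑ i ∈ range k, i := by
  rw [← hb.digits_sum_eq hk]
  exact (Nat.modEq_digits_sum_sub_one hk.le n).dvd_iff he

end DigBal

theorem digBal_ofDigits {k c : ℕ} (hk : 1 < k) {L : List ℕ} (hc : ∀ i < k, L.count i = c)
    (hlt : ∀ x ∈ L, x < k) (hlast : ∀ h : L ≠ [], L.getLast h ≠ 0) :
    DigBal k (Nat.ofDigits k L) := by
  intro i j hi hj
  rw [Nat.digits_ofDigits k hk L hlt hlast, hc i hi, hc j hj]

theorem exists_digBal_count_zero_eq_one {k : ℕ} (hk : 1 < k) :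
    ∃ n, 0 < n ∧ DigBal k n ∧ (Nat.digits k n).count 0 = 1 := by
  have hdigits : Nat.digits k (Nat.ofDigits k (List.range k)) = List.range k :=
    Nat.digits_ofDigits k hk _ (fun _ => List.mem_range.1) fun _ => by simp; omega
  refine ⟨Nat.ofDigits k (List.range k), Nat.pos_of_ne_zero fun h => ?_, fun i j hi hj => ?_, ?_⟩
  · simp only [h, Nat.digits_zero, List.nil_eq, List.range_eq_nil] at hdigits
    omega
  · simp [hdigits, List.count_range, hi, hj]
  · simp [hdigits, List.count_range, zero_lt_one.trans hk]

/-- The witnesses have digits `1 0 2 3 … (k-1) 0 1 … (k-1)` and `0 1 2 3 … (k-1) 0 1 … (k-1)`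
(lowest digit first); the second copy of `0 … (k-1)` keeps them valid for `k = 2`. -/
theorem exists_digBal_add_sub_one {k : ℕ} (hk : 1 < k) :
    ∃ n, 0 < n ∧ DigBal k n ∧ DigBal k (n + (k - 1)) := by
  obtain ⟨m, rfl⟩ : ∃ m, k = m + 2 := ⟨k - 2, by omega⟩
  set X := List.range' 2 m ++ List.range (m + 2)
  have hX : List.range (m + 2) ++ List.range (m + 2) = 0 :: 1 :: X := by
    simp [X, List.range_eq_range', List.range'_succ]
  have hperm : (1 :: 0 :: X).Perm (List.range (m + 2) ++ List.range (m + 2)) :=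
    hX ▸ List.Perm.swap 0 1 X
  have hswap : Nat.ofDigits (m + 2) (1 :: 0 :: X) + (m + 2 - 1) =
      Nat.ofDigits (m + 2) (0 :: 1 :: X) := by
    simp only [Nat.ofDigits_cons, zero_add, Nat.add_one_sub_one]
    ring
  refine ⟨Nat.ofDigits (m + 2) (1 :: 0 :: X), by simp [Nat.ofDigits_cons], ?_, ?_⟩
  · refine digBal_ofDigits hk (c := 2) (fun i hi => ?_) (fun x hx => ?_) fun _ => ?_
    · simp [hperm.count_eq, List.count_range, hi]
    · simpa using hperm.subset hx
    · simp [X, List.getLast_cons, List.getLast_range]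
  · rw [hswap, ← hX]
    refine digBal_ofDigits hk (c := 2) (fun i hi => ?_) (fun x hx => ?_) fun _ => ?_
    · simp [List.count_range, hi]
    · simpa using hx
    · simp [List.getLast_range]

theorem gcd_digitally_balanced (k : ℕ) (hk : 2 ≤ k) (g : ℕ)
    (hg : g = if Odd k then (k - 1) / 2 else k - 1) :
    (∀ n : ℕ, 0 < n → DigBal k n → g ∣ n) ∧
    (∀ d : ℕ, (∀ n : ℕ, 0 < n → DigBal k n → d ∣ n) → d ∣ g) := by
  rw [hg, ← Nat.gcd_sub_one_sum_range]
  refine ⟨fun n _ hb => ?_, fun d hd => ?_⟩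
  · exact (hb.dvd_iff hk (Nat.gcd_dvd_left _ _)).2
      (dvd_mul_of_dvd_right (Nat.gcd_dvd_right _ _) _)
  obtain ⟨n, hn, hb, hb'⟩ := exists_digBal_add_sub_one hk
  have hdk : d ∣ k - 1 := (Nat.dvd_add_right (hd n hn hb)).1 (hd _ (by omega) hb')
  obtain ⟨r, hr, hbr, hr0⟩ := exists_digBal_count_zero_eq_one hk
  have hdT := (hbr.dvd_iff hk hdk).1 (hd r hr hbr)
  rw [hr0, one_mul] at hdT
  exact Nat.dvd_gcd hdk hdT
end

section
/- If N is a positive base-3 digitally balanced number, then 27N + c is also a positive base-3 digitally balanced number for each c ∈ {5, 7, 11, 15, 19, 21}. -/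
/-!
Appending a base-3 digit block to `N` multiplies it by `27` and adds the block's value; since the
leading digit of `N` is nonzero, the digits of the result are the block followed by those of `N`.
The six constants are exactly the values of the six orderings of the digits `0, 1, 2`, so each
digit count goes up by one and balance is preserved.
-/

def DigBal3 (n : ℕ) : Prop :=
  (Nat.digits 3 n).count 0 = (Nat.digits 3 n).count 1 ∧
  (Nat.digits 3 n).count 1 = (Nat.digits 3 n).count 2

namespace Nat

theorem digits_ofDigits_add_pow_mul {b n : ℕ} (hb : 1 < b) (hn : n ≠ 0) {l : List ℕ}
    (hl : ∀ d ∈ l, d < b) :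
    digits b (ofDigits b l + b ^ l.length * n) = l ++ digits b n := by
  rw [← ofDigits_digits b n, ← ofDigits_append, ofDigits_digits]
  apply digits_ofDigits b hb
  · simp only [List.mem_append]
    rintro d (hd | hd)
    exacts [hl d hd, digits_lt_base hb hd]
  · intro _
    rw [List.getLast_append_of_ne_nil _ (digits_ne_nil_iff_ne_zero.mpr hn)]
    exact getLast_digit_ne_zero b hn

end Nat

theorem DigBal3.of_digits_eq_perm_append {M N : ℕ} (hN : DigBal3 N) {l : List ℕ}
    (hl : l.Perm [0, 1, 2]) (hM : Nat.digits 3 M = l ++ Nat.digits 3 N) : DigBal3 M := by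
  obtain ⟨h01, h12⟩ := hN
  simp only [DigBal3, hM, List.count_append, hl.count_eq]
  constructor <;> simp [h01, h12]

theorem exists_perm_ofDigits_eq {c : ℕ} (hc : c ∈ ({5, 7, 11, 15, 19, 21} : Set ℕ)) :
    ∃ l : List ℕ, l.Perm [0, 1, 2] ∧ Nat.ofDigits 3 l = c := by
  simp only [Set.mem_insert_iff, Set.mem_singleton_iff] at hc
  rcases hc with rfl | rfl | rfl | rfl | rfl | rfl
  exacts [⟨[2, 1, 0], by decide, rfl⟩, ⟨[1, 2, 0], by decide, rfl⟩, ⟨[2, 0, 1], by decide, rfl⟩,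
    ⟨[0, 2, 1], by decide, rfl⟩, ⟨[1, 0, 2], by decide, rfl⟩, ⟨[0, 1, 2], by decide, rfl⟩]

theorem balanced3_shift (N : ℕ) (hN : 0 < N) (hb : DigBal3 N)
    (c : ℕ) (hc : c ∈ ({5, 7, 11, 15, 19, 21} : Set ℕ)) :
    0 < 27 * N + c ∧ DigBal3 (27 * N + c) := by
  obtain ⟨l, hl, rfl⟩ := exists_perm_ofDigits_eq hc
  have hdigits : Nat.digits 3 (27 * N + Nat.ofDigits 3 l) = l ++ Nat.digits 3 N := by
    have hlt : ∀ d ∈ l, d < 3 := fun d hd => by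
      have := hl.subset hd
      simp only [List.mem_cons, List.not_mem_nil, or_false] at this
      omega
    rw [← Nat.digits_ofDigits_add_pow_mul (by norm_num) hN.ne' hlt, hl.length_eq, add_comm]
    rfl
  exact ⟨by positivity, hb.of_digits_eq_perm_append hl hdigits⟩
end

section
/- Every natural number can be written as x + y where the binary representations of x and y each lie in the language 0^* + 0^*1(1+10+01)^* (i.e., x, y are 0 or have a binary representation of the form 1 followed by blocks from {1, 10, 01}). -/
/-!
Appending the blocks `1`, `01`, `10` to a binary word maps `x` to `2x + 1`, `4x + 1`, `4x + 2`
respectively, so by strong induction on `n = a + b` with `a, b ∈ S` one gets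
`2n + 2 = (2a + 1) + (2b + 1)`, `4n + 3 = (4a + 1) + (4b + 2)` and `4n + 5 = (4a + 3) + (4b + 2)`;
only `1`, `3`, `5` need to be written directly. Appending `10` needs `b ≠ 0` (the word `10` is not
in `L`), which is kept as part of the induction by always placing the nonzero summand second.
-/

def InL (w : List ℕ) : Prop :=
  ∃ blocks : List (List ℕ),
    (∀ b ∈ blocks, b = [1] ∨ b = [1, 0] ∨ b = [0, 1]) ∧
    w = 1 :: blocks.flatten

theorem InL.append {w b : List ℕ} (hw : InL w) (hb : b = [1] ∨ b = [1, 0] ∨ b = [0, 1]) :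
    InL (w ++ b) := by
  obtain ⟨blocks, hblocks, rfl⟩ := hw
  refine ⟨blocks ++ [b], fun c hc => ?_, by simp⟩
  rcases List.mem_append.1 hc with hc | hc
  · exact hblocks c hc
  · rwa [List.mem_singleton.1 hc]

theorem Nat.digits_reverse_add_mul {b : ℕ} (hb : 1 < b) {d x : ℕ} (hd : d < b)
    (hdx : d ≠ 0 ∨ x ≠ 0) :
    (Nat.digits b (d + b * x)).reverse = (Nat.digits b x).reverse ++ [d] := by
  rw [Nat.digits_add b hb d x hd hdx, List.reverse_cons]

/-- The set `S` of the paper. -/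
def lNumbers : Set ℕ := {x | x = 0 ∨ InL (Nat.digits 2 x).reverse}

namespace lNumbers

theorem one_mem : 1 ∈ lNumbers := Or.inr ⟨[], by simp, by simp⟩

theorem two_mul_add_one_mem {x : ℕ} (hx : x ∈ lNumbers) : 2 * x + 1 ∈ lNumbers := by
  rcases hx with rfl | hx
  · exact one_mem
  refine Or.inr ?_
  rw [show 2 * x + 1 = 1 + 2 * x by ring, Nat.digits_reverse_add_mul one_lt_two one_lt_two
    (Or.inl one_ne_zero)]
  exact hx.append (Or.inl rfl)

theorem four_mul_add_one_mem {x : ℕ} (hx : x ∈ lNumbers) : 4 * x + 1 ∈ lNumbers := by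
  rcases hx with rfl | hx
  · exact one_mem
  have hx0 : x ≠ 0 := by rintro rfl; simp [InL] at hx
  refine Or.inr ?_
  rw [show 4 * x + 1 = 1 + 2 * (0 + 2 * x) by ring,
    Nat.digits_reverse_add_mul one_lt_two one_lt_two (Or.inl one_ne_zero),
    Nat.digits_reverse_add_mul one_lt_two two_pos (Or.inr hx0), List.append_assoc]
  exact hx.append (Or.inr (Or.inr rfl))

theorem four_mul_add_two_mem {x : ℕ} (hx : x ∈ lNumbers) (hx0 : x ≠ 0) :
    4 * x + 2 ∈ lNumbers := by
  replace hx := hx.resolve_left hx0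
  refine Or.inr ?_
  rw [show 4 * x + 2 = 0 + 2 * (1 + 2 * x) by ring,
    Nat.digits_reverse_add_mul one_lt_two two_pos (Or.inr (by omega)),
    Nat.digits_reverse_add_mul one_lt_two one_lt_two (Or.inl one_ne_zero), List.append_assoc]
  exact hx.append (Or.inr (Or.inl rfl))

theorem exists_add_eq (n : ℕ) :
    ∃ x ∈ lNumbers, ∃ y ∈ lNumbers, n = x + y ∧ (n ≠ 0 → y ≠ 0) := by
  induction n using Nat.strong_induction_on with
  | _ n ih =>
  obtain ⟨m, rfl | rfl⟩ := Nat.even_or_odd' n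
  · rcases m with _ | m
    · exact ⟨0, Or.inl rfl, 0, Or.inl rfl, rfl, absurd rfl⟩
    obtain ⟨a, ha, b, hb, rfl, -⟩ := ih m (by omega)
    exact ⟨2 * a + 1, two_mul_add_one_mem ha, 2 * b + 1, two_mul_add_one_mem hb, by ring,
      fun _ => by omega⟩
  obtain ⟨k, rfl | rfl⟩ := Nat.even_or_odd' m
  · rcases k with _ | _ | k
    · exact ⟨0, Or.inl rfl, 1, one_mem, rfl, fun _ => one_ne_zero⟩
    · exact ⟨0, Or.inl rfl, 5, four_mul_add_one_mem one_mem, rfl, fun _ => by norm_num⟩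
    obtain ⟨a, ha, b, hb, hab, hb0⟩ := ih (k + 1) (by omega)
    exact ⟨2 * (2 * a + 1) + 1, two_mul_add_one_mem (two_mul_add_one_mem ha), 4 * b + 2,
      four_mul_add_two_mem hb (hb0 (by omega)), by omega, fun _ => by omega⟩
  · rcases k with _ | k
    · exact ⟨0, Or.inl rfl, 3, two_mul_add_one_mem one_mem, rfl, fun _ => by norm_num⟩
    obtain ⟨a, ha, b, hb, hab, hb0⟩ := ih (k + 1) (by omega)
    exact ⟨4 * a + 1, four_mul_add_one_mem ha, 4 * b + 2,
      four_mul_add_two_mem hb (hb0 (by omega)), by omega, fun _ => by omega⟩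

end lNumbers

theorem sum_two_lang (n : ℕ) :
    ∃ x y : ℕ, n = x + y ∧ (x = 0 ∨ InL ((Nat.digits 2 x).reverse)) ∧
      (y = 0 ∨ InL ((Nat.digits 2 y).reverse)) := by
  obtain ⟨x, hx, y, hy, hxy, -⟩ := lNumbers.exists_add_eq n
  exact ⟨x, y, hxy, hx, hy⟩
end

section
/- If x is a natural number whose binary representation (of length n) has at least as many 0's as 1's, and 2^n − 1 = x + y for some natural number y whose binary representation has length t < n, then y has strictly more 1's than 0's in its binary representation. -/
/-! The two `n`-digit binary strings of `x` and of `y` padded with zeros add up to `1…1 = 2 ^ n - 1`,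
so they are bitwise complements. Complementing swaps the numbers of 0's and 1's, and the padding
contributes at least one 0 because `y` has fewer than `n` digits. -/

namespace Nat

theorem ofDigits_two_map_one_sub_add_ofDigits {l : List ℕ} (hl : ∀ d ∈ l, d < 2) :
    ofDigits 2 (l.map (1 - ·)) + ofDigits 2 l + 1 = 2 ^ l.length := by
  induction l with
  | nil => simp
  | cons d l ih =>
    have hd : d < 2 := hl d List.mem_cons_self
    have ih := ih fun e he => hl e (List.mem_cons_of_mem d he)
    simp only [List.map_cons, ofDigits_cons, List.length_cons, pow_succ]
    interval_cases d <;> omega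

theorem digitsAppend_two_ofDigits_map_one_sub {l : List ℕ} (hl : ∀ d ∈ l, d < 2) :
    digitsAppend 2 l.length (2 ^ l.length - 1 - ofDigits 2 l) = l.map (1 - ·) := by
  have hsum := ofDigits_two_map_one_sub_add_ofDigits hl
  rw [show 2 ^ l.length - 1 - ofDigits 2 l = ofDigits 2 (l.map (1 - ·)) by omega]
  refine (setInvOn_digitsAppend_ofDigits one_lt_two l.length).1 ⟨List.length_map _, ?_⟩
  simp only [List.mem_map]
  rintro _ ⟨d, -, rfl⟩
  omega

end Nat

theorem List.count_map_one_sub {l : List ℕ} (hl : ∀ d ∈ l, d < 2) {i : ℕ} (hi : i < 2) :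
    (l.map (1 - ·)).count i = l.count (1 - i) := by
  rw [List.count, List.countP_map, List.count]
  refine List.countP_congr fun d hd => ?_
  have := hl d hd
  simp only [Function.comp_apply, beq_iff_eq]
  omega

theorem complement_summand_more_ones (x y n : ℕ)
    (hlen : (Nat.digits 2 x).length = n)
    (hx : (Nat.digits 2 x).count 1 ≤ (Nat.digits 2 x).count 0)
    (hsum : 2 ^ n - 1 = x + y)
    (hy : (Nat.digits 2 y).length < n) :
    (Nat.digits 2 y).count 0 < (Nat.digits 2 y).count 1 := by
  have hbits : ∀ d ∈ Nat.digits 2 x, d < 2 := fun _ => Nat.digits_lt_base one_lt_two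
  have hcompl := Nat.digitsAppend_two_ofDigits_map_one_sub hbits
  rw [Nat.ofDigits_digits, hlen, show 2 ^ n - 1 - x = y by omega] at hcompl
  have h0 := congrArg (List.count 0) hcompl
  have h1 := congrArg (List.count 1) hcompl
  simp only [Nat.digitsAppend, List.count_append, List.count_replicate,
    List.count_map_one_sub hbits, Order.lt_two_iff, zero_le, le_refl, tsub_zero, tsub_self,
    Nat.reduceBEq, Bool.false_eq_true, ↓reduceIte, add_zero] at h0 h1
  omega
end
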